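/- Let 𝒢 be an e-graph, G its converted circuit, and φ a minimal satisfying extraction of 𝒢. If φ is acyclic (there is no selected path in φ from an e-class to itself), then the evaluation α_φ is acyclic: the subgraph G[α_φ] induced by the vertices set to 1 contains no directed cycle. -/
import Mathlib


/-- Gate types for a monotone circuit. -/
inductive Gate where
  | AND : Gate
  | OR : Gate
deriving DecidableEq

/-- A weighted cyclic monotone circuit: a directed graph with a set of outputs,
a gate-type function, and a cost function (costs are only meaningful on inputs). -/
structure Circuit (V : Type) where
  edge : V → V → Prop
  isOut : V → Prop
  gate : V → Gate
  cost : V → ℝ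

namespace Circuit

variable {V : Type}

/-- The inputs are the vertices of in-degree 0. -/
def IsInput (G : Circuit V) (u : V) : Prop := ∀ v, ¬ G.edge v u

/-- A valid evaluation: each non-input gate evaluates to its gate function applied to
the values of its in-neighbors. -/
def Valid (G : Circuit V) (α : V → Bool) : Prop :=
  ∀ u : V, ¬ G.IsInput u →
    (α u = true ↔
      match G.gate u with
      | Gate.AND => ∀ v, G.edge v u → α v = true
      | Gate.OR => ∃ v, G.edge v u ∧ α v = true)

/-- An evaluation satisfies the circuit if it is 1 on all outputs. -/
def Satisfies (G : Circuit V) (α : V → Bool) : Prop :=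
  ∀ u, G.isOut u → α u = true

/-- The restriction `α|_A`: equal to `α` on `A` and `0` (false) elsewhere. -/
noncomputable def restrict (α : V → Bool) (A : Set V) : V → Bool :=
  fun u => @ite _ (u ∈ A) (Classical.propDecidable _) (α u) false

/-- A minimal satisfying evaluation: valid, satisfying, and no restriction of its
true set to a proper subset is a valid satisfying evaluation. -/
def MinSat (G : Circuit V) (α : V → Bool) : Prop :=
  G.Valid α ∧ G.Satisfies α ∧
    ∀ A : Set V, A ⊂ {u | α u = true} →
      ¬ (G.Valid (restrict α A) ∧ G.Satisfies (restrict α A))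

/-- `α` is acyclic if the subgraph `G[α]` induced by the true vertices has no
directed cycle. -/
def EvalAcyclic (G : Circuit V) (α : V → Bool) : Prop :=
  ∀ u, ¬ Relation.TransGen (fun a b => G.edge a b ∧ α a = true ∧ α b = true) u u

end Circuit

/-- An e-graph: a finite set `N` of e-nodes partitioned into e-classes (indexed by the
type `C`, via the surjective class map `cls`), a dependency relation `edge ⊆ N × C`,
a set of output classes, and a cost function. -/
structure EGraph (N C : Type) where
  cls : N → C
  surj : Function.Surjective cls
  edge : N → C → Prop
  isOut : C → Prop
  cost : N → ℝ

namespace EGraph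

variable {N C : Type}

/-- An extraction, modeled as a partial function `C → Option N`: a choice function
(on its domain) closed under dependencies. -/
def IsExtraction (𝒢 : EGraph N C) (φ : C → Option N) : Prop :=
  (∀ D u, φ D = some u → 𝒢.cls u = D) ∧
  (∀ D u D', φ D = some u → 𝒢.edge u D' → (φ D').isSome)

/-- A satisfying extraction: an extraction whose domain contains all output classes. -/
def SatExtraction (𝒢 : EGraph N C) (φ : C → Option N) : Prop :=
  𝒢.IsExtraction φ ∧ ∀ D, 𝒢.isOut D → (φ D).isSome

/-- The restriction `φ|_𝒜` of an extraction to a set of classes. -/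
noncomputable def restrictExt (φ : C → Option N) (𝒜 : Set C) : C → Option N :=
  fun D => @ite _ (D ∈ 𝒜) (Classical.propDecidable _) (φ D) none

/-- A minimally satisfying extraction: satisfying, and no restriction to a proper
subset of its domain is a satisfying extraction. -/
def MinSatExtraction (𝒢 : EGraph N C) (φ : C → Option N) : Prop :=
  𝒢.SatExtraction φ ∧
    ∀ 𝒜 : Set C, 𝒜 ⊂ {D | (φ D).isSome = true} →
      ¬ 𝒢.SatExtraction (restrictExt φ 𝒜)

/-- An extraction is acyclic if there is no (nontrivial) selected path from a class
to itself. -/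
def ExtAcyclic (𝒢 : EGraph N C) (φ : C → Option N) : Prop :=
  ∀ D, ¬ Relation.TransGen (fun D₁ D₂ => ∃ u, φ D₁ = some u ∧ 𝒢.edge u D₂) D D

/-- Vertices of the converted circuit: an input `x_u` and an AND gate `∧_u` for each
e-node `u`, and an OR gate `∨_D` for each e-class `D`. -/
inductive Vtx (N C : Type) where
  | x : N → Vtx N C
  | and : N → Vtx N C
  | or : C → Vtx N C

/-- The converted circuit of an e-graph: edges `(∧_u, ∨_D)` for `u ∈ D`,
`(∨_D, ∧_u)` for `(u, D) ∈ ℰ`, and `(x_u, ∧_u)`; outputs `∨_D` for output classes `D`;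
gate types AND on `∧_u`, OR on `∨_D`; cost `c(x_u) = c(u)`. -/
def conv (𝒢 : EGraph N C) : Circuit (Vtx N C) where
  edge a b :=
    match a, b with
    | .and u, .or D => 𝒢.cls u = D
    | .or D, .and u => 𝒢.edge u D
    | .x u, .and v => u = v
    | _, _ => False
  isOut a :=
    match a with
    | .or D => 𝒢.isOut D
    | _ => False
  gate a :=
    match a with
    | .or _ => Gate.OR
    | _ => Gate.AND
  cost a :=
    match a with
    | .x u => 𝒢.cost u
    | _ => 0

/-- The evaluation `α_φ` associated to an extraction `φ`:
`α_φ(x_u) = α_φ(∧_u) = 1` iff `φ(cls u) = u`, and `α_φ(∨_D) = 1` iff `D ∈ dom φ`. -/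
noncomputable def evalOf (𝒢 : EGraph N C) (φ : C → Option N) : Vtx N C → Bool :=
  fun a =>
    match a with
    | .x u => @decide (φ (𝒢.cls u) = some u) (Classical.propDecidable _)
    | .and u => @decide (φ (𝒢.cls u) = some u) (Classical.propDecidable _)
    | .or D => (φ D).isSome

/-- The extraction `φ_α` associated to an evaluation `α`:
`D ∈ dom φ_α` and `φ_α(D) = u` iff `u ∈ D` and `α(∧_u) = 1`. -/
noncomputable def extOf (𝒢 : EGraph N C) (α : Vtx N C → Bool) : C → Option N :=
  fun D =>
    @dite _ (∃ u, 𝒢.cls u = D ∧ α (Vtx.and u) = true) (Classical.propDecidable _)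
      (fun h => some h.choose) (fun _ => none)

end EGraph

/-- if a minimal satisfying extraction `φ` is acyclic (no selected path
from a class to itself), then the evaluation `α_φ` is acyclic (the subgraph of the
converted circuit induced by the true vertices has no directed cycle). -/
theorem stmt10 {N C : Type} [Fintype N] [Fintype C] (𝒢 : EGraph N C)
    (φ : C → Option N) (hφ : 𝒢.MinSatExtraction φ) (hac : 𝒢.ExtAcyclic φ) :
    (𝒢.conv).EvalAcyclic (𝒢.evalOf φ) := by
  intro a hcyc
  set sel : C → C → Prop := fun D₁ D₂ => ∃ u, φ D₁ = some u ∧ 𝒢.edge u D₂ with hsel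
  set r : EGraph.Vtx N C → EGraph.Vtx N C → Prop :=
    fun a b => (𝒢.conv).edge a b ∧ 𝒢.evalOf φ a = true ∧ 𝒢.evalOf φ b = true with hr
  let f : EGraph.Vtx N C → C := fun v => match v with
    | .x u => 𝒢.cls u | .and u => 𝒢.cls u | .or D => D
  let rk : EGraph.Vtx N C → ℕ := fun v => match v with
    | .x _ => 0 | .and _ => 1 | .or _ => 2
  have step : ∀ a b, r a b →
      Relation.TransGen sel (f b) (f a) ∨ (f a = f b ∧ rk a < rk b) := by
    rintro a b ⟨he, ha, hb⟩
    cases a with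
    | x u =>
      cases b with
      | x v => exact he.elim
      | and v =>
        have huv : u = v := he
        subst huv
        exact Or.inr ⟨rfl, Nat.zero_lt_one⟩
      | or D => exact he.elim
    | and u =>
      cases b with
      | x v => exact he.elim
      | and v => exact he.elim
      | or D =>
        have hD : 𝒢.cls u = D := he
        exact Or.inr ⟨hD, Nat.one_lt_two⟩
    | or D =>
      cases b with
      | x v => exact he.elim
      | and v =>
        have hev : 𝒢.edge v D := he
        have hv : φ (𝒢.cls v) = some v := by
          have : @decide (φ (𝒢.cls v) = some v) (Classical.propDecidable _) = true := hb
          exact @of_decide_eq_true _ (Classical.propDecidable _) this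
        exact Or.inl (Relation.TransGen.single ⟨v, hv, hev⟩)
      | or D' => exact he.elim
  have key : ∀ a b, Relation.TransGen r a b →
      Relation.TransGen sel (f b) (f a) ∨ (f a = f b ∧ rk a < rk b) := by
    intro a b h
    induction h with
    | single h => exact step _ _ h
    | tail h1 h2 ih =>
      rcases ih with hs | ⟨heq, hrk⟩
      · rcases step _ _ h2 with hs' | ⟨heq', _⟩
        · exact Or.inl (hs'.trans hs)
        · rw [← heq']
          exact Or.inl hs
      · rcases step _ _ h2 with hs' | ⟨heq', hrk'⟩
        · rw [heq]
          exact Or.inl hs'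
        · exact Or.inr ⟨heq.trans heq', hrk.trans hrk'⟩
  rcases key a a hcyc with hs | ⟨_, hrk⟩
  · -- a selected-path cycle on classes, contradicting hac
    have : Relation.TransGen (fun D₁ D₂ => ∃ u, φ D₁ = some u ∧ 𝒢.edge u D₂) (f a) (f a) := hs
    exact hac (f a) this
  · exact absurd hrk (lt_irrefl _)
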